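/- If one repeatedly contracts around a fixed vertex v in a properly 2-coloured connected graph G (each contraction flipping the colour of v's component and absorbing all neighbouring components), then after r contractions the component of v consists exactly of all vertices at distance at most r from v; hence the number of contractions about v needed to flood G equals the eccentricity of v. -/

import Mathlib

namespace Flood

variable {V C : Type*}

/-- Two vertices are joined by an edge inside a monochromatic class. -/
def monoAdj (G : SimpleGraph V) (ω : V → C) (a b : V) : Prop :=
  G.Adj a b ∧ ω a = ω b

/-- `u` and `v` lie in a common monochromatic component of the colouring `ω`. -/
def monoLinked (G : SimpleGraph V) (ω : V → C) (u v : V) : Prop :=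
  Relation.ReflTransGen (monoAdj G ω) u v

/-- One flooding move: recolour the monochromatic component of `v` with colour `d`. -/
noncomputable def floodMove (G : SimpleGraph V) (ω : V → C) (v : V) (d : C) : V → C :=
  fun u => @ite _ (monoLinked G ω v u) (Classical.propDecidable _) d (ω u)

/-- Apply a sequence of flooding moves. -/
noncomputable def floodSeq (G : SimpleGraph V) (ω : V → C) (S : List (V × C)) : V → C :=
  S.foldl (fun ω' m => floodMove G ω' m.1 m.2) ω

/-- The sequence `S` floods `G`, i.e. makes it monochromatic. -/
def Floods (G : SimpleGraph V) (ω : V → C) (S : List (V × C)) : Prop :=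
  ∀ a b, floodSeq G ω S a = floodSeq G ω S b

/-- Minimum number of moves needed to make `G` monochromatic. -/
noncomputable def floodCost (G : SimpleGraph V) (ω : V → C) : ℕ :=
  sInf {k | ∃ S, S.length = k ∧ Floods G ω S}

/-- Minimum number of moves needed to make `G` monochromatic in colour `d`. -/
noncomputable def floodCostIn (G : SimpleGraph V) (ω : V → C) (d : C) : ℕ :=
  sInf {k | ∃ S, S.length = k ∧ ∀ a, floodSeq G ω S a = d}

/-- The sequence `S` links `u` and `v`. -/
def Links (G : SimpleGraph V) (ω : V → C) (S : List (V × C)) (u v : V) : Prop :=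
  monoLinked G (floodSeq G ω S) u v

/-- Minimum number of moves needed to link `u` and `v`. -/
noncomputable def linkCost (G : SimpleGraph V) (ω : V → C) (u v : V) : ℕ :=
  sInf {k | ∃ S, S.length = k ∧ Links G ω S u v}

/-- Minimum number of moves needed to link `u` and `v` in a monochromatic
component of colour `d`. -/
noncomputable def linkCostIn (G : SimpleGraph V) (ω : V → C) (u v : V) (d : C) : ℕ :=
  sInf {k | ∃ S, S.length = k ∧ Links G ω S u v ∧ floodSeq G ω S u = d}


end Flood

open Flood

/-!
In a proper 2-colouring the colour of `u` is `ω v` flipped `d(v, u)` times. After `r` contractions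
about `v`, the colour of `u` is `ω v` flipped `max r d(v, u)` times: the ball of radius `r` is
monochromatic while the spheres outside it still alternate, so the sphere of radius `r + 1` has
the other colour. Hence the component of `v` is exactly that ball, and the next contraction
recolours it to match the sphere of radius `r + 1`.
-/

namespace SimpleGraph

variable {V : Type*} {G : SimpleGraph V}

theorem Walk.eq_xor_bodd_length {ω : V → Bool} (hω : ∀ a b, G.Adj a b → ω a ≠ ω b)
    {a b : V} (p : G.Walk a b) : ω b = (ω a ^^ p.length.bodd) := by
  induction p with
  | nil => simp
  | @cons x y z h q ih =>
    rw [ih, Bool.eq_not.mpr (hω x y h).symm, Walk.length_cons, Nat.bodd_succ, Bool.not_xor,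
      Bool.xor_not]

theorem Connected.eq_xor_bodd_dist (hG : G.Connected) {ω : V → Bool}
    (hω : ∀ a b, G.Adj a b → ω a ≠ ω b) (v u : V) : ω u = (ω v ^^ (G.dist v u).bodd) := by
  obtain ⟨p, hp⟩ := hG.exists_walk_length_eq_dist v u
  rw [← hp]
  exact p.eq_xor_bodd_length hω

theorem exists_adj_dist_eq_of_dist_eq_add_one {v u : V} {n : ℕ} (h : G.dist v u = n + 1) :
    ∃ w, G.Adj w u ∧ G.dist v w = n := by
  obtain ⟨p, hp⟩ := exists_walk_of_dist_ne_zero (G := G) (u := u) (v := v)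
    (by rw [dist_comm, h]; exact n.succ_ne_zero)
  cases p with
  | nil => simp_all
  | @cons _ w _ hadj q =>
    refine ⟨w, hadj.symm, ?_⟩
    rw [Walk.length_cons, dist_comm, h] at hp
    have hq : G.dist v w ≤ n := (q.length_reverse ▸ dist_le q.reverse).trans (by omega)
    rcases hadj.symm.diff_dist_adj (u := v) with h' | h' | h' <;> omega

end SimpleGraph

open SimpleGraph

namespace Flood

variable {V C : Type*} {G : SimpleGraph V}

theorem monoLinked_of_forall_eq (hG : G.Connected) {ω : V → C} (hω : ∀ a b, ω a = ω b)
    (u v : V) : monoLinked G ω u v :=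
  Relation.ReflTransGen.mono (fun a b hab => ⟨hab, hω a b⟩) u v
    ((reachable_iff_reflTransGen u v).mp (hG u v))

noncomputable def radialColouring (G : SimpleGraph V) (v : V) (b : Bool) (r : ℕ) : V → Bool :=
  fun u => b ^^ (max r (G.dist v u)).bodd

theorem radialColouring_of_dist_le {v : V} {b : Bool} {r : ℕ} {u : V} (h : G.dist v u ≤ r) :
    radialColouring G v b r u = (b ^^ r.bodd) := by
  rw [radialColouring, max_eq_left h]

theorem monoLinked_radialColouring_iff (hG : G.Connected) (v : V) (b : Bool) (r : ℕ) (u : V) :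
    monoLinked G (radialColouring G v b r) v u ↔ G.dist v u ≤ r := by
  constructor
  · intro h
    induction h with
    | refl => simp
    | @tail a c _ hac ih =>
      by_contra hc
      have hdist : G.dist v c = r + 1 := by
        rcases hac.1.diff_dist_adj (u := v) with h' | h' | h' <;> omega
      have := hac.2
      rw [radialColouring_of_dist_le ih, radialColouring, max_eq_right (by omega), hdist,
        Nat.bodd_succ, Bool.xor_not] at this
      exact Bool.not_ne_self _ this.symm
  · intro h
    induction hd : G.dist v u generalizing u with
    | zero =>
      obtain rfl := hG.dist_eq_zero_iff.mp hd
      exact .refl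
    | succ n ih =>
      obtain ⟨w, hwu, hw⟩ := exists_adj_dist_eq_of_dist_eq_add_one hd
      refine (ih w (by omega) hw).tail ⟨hwu, ?_⟩
      rw [radialColouring_of_dist_le (by omega), radialColouring_of_dist_le h]

theorem radialColouring_zero (hG : G.Connected) {ω : V → Bool}
    (hω : ∀ a b, G.Adj a b → ω a ≠ ω b) (v : V) : radialColouring G v (ω v) 0 = ω := by
  funext u
  rw [radialColouring, Nat.zero_max, ← hG.eq_xor_bodd_dist hω]

theorem floodMove_radialColouring (hG : G.Connected) (v : V) (b : Bool) (r : ℕ) :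
    floodMove G (radialColouring G v b r) v (!radialColouring G v b r v) =
      radialColouring G v b (r + 1) := by
  funext u
  rw [floodMove]
  split_ifs with h
  · rw [monoLinked_radialColouring_iff hG] at h
    rw [radialColouring_of_dist_le (by simp), radialColouring_of_dist_le (by omega),
      Nat.bodd_succ, Bool.xor_not]
  · rw [monoLinked_radialColouring_iff hG] at h
    simp only [radialColouring]
    rw [max_eq_right (by omega), max_eq_right (by omega)]

theorem iterate_contract_eq_radialColouring (hG : G.Connected) {ω : V → Bool}
    (hω : ∀ a b, G.Adj a b → ω a ≠ ω b) (v : V) (r : ℕ) :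
    (fun ω' => floodMove G ω' v (!ω' v))^[r] ω = radialColouring G v (ω v) r := by
  induction r with
  | zero => exact (radialColouring_zero hG hω v).symm
  | succ r ih => rw [Function.iterate_succ_apply', ih, floodMove_radialColouring hG]

theorem radialColouring_forall_eq_iff (hG : G.Connected) (v : V) (b : Bool) (r : ℕ) :
    (∀ a c, radialColouring G v b r a = radialColouring G v b r c) ↔ ∀ u, G.dist v u ≤ r :=
  ⟨fun h u => (monoLinked_radialColouring_iff hG v b r u).mp (monoLinked_of_forall_eq hG h v u),
    fun h a c => by rw [radialColouring_of_dist_le (h a), radialColouring_of_dist_le (h c)]⟩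

end Flood

theorem contractions_about_vertex_ball_general {V : Type*}
    (G : SimpleGraph V) (hG : G.Connected) (ω : V → Bool)
    (hprop : ∀ a b, G.Adj a b → ω a ≠ ω b) (v : V) :
    (∀ r : ℕ, ∀ u : V,
        monoLinked G ((fun ω' => floodMove G ω' v (!ω' v))^[r] ω) v u ↔
          G.dist v u ≤ r) ∧
    sInf {r | ∀ a b : V,
        ((fun ω' => floodMove G ω' v (!ω' v))^[r] ω) a =
          ((fun ω' => floodMove G ω' v (!ω' v))^[r] ω) b}
      = sInf {e | ∀ u : V, G.dist v u ≤ e} := by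
  simp only [iterate_contract_eq_radialColouring hG hprop]
  exact ⟨monoLinked_radialColouring_iff hG v (ω v),
    congrArg sInf (Set.ext fun r => radialColouring_forall_eq_iff hG v (ω v) r)⟩

/-- repeatedly contracting about a fixed vertex `v` of a connected,
properly two-coloured graph, after `r` contractions the monochromatic component
of `v` is exactly the ball of radius `r` about `v`; hence the number of
contractions about `v` needed to flood `G` equals the eccentricity of `v`. -/
theorem contractions_about_vertex_ball {V : Type*} [Fintype V]
    (G : SimpleGraph V) (hG : G.Connected) (ω : V → Bool)
    (hprop : ∀ a b, G.Adj a b → ω a ≠ ω b) (v : V) :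
    (∀ r : ℕ, ∀ u : V,
        monoLinked G ((fun ω' => floodMove G ω' v (!ω' v))^[r] ω) v u ↔
          G.dist v u ≤ r) ∧
    sInf {r | ∀ a b : V,
        ((fun ω' => floodMove G ω' v (!ω' v))^[r] ω) a =
          ((fun ω' => floodMove G ω' v (!ω' v))^[r] ω) b}
      = sInf {e | ∀ u : V, G.dist v u ≤ e} :=
  contractions_about_vertex_ball_general G hG ω hprop v
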